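/- arXiv:2107.07841 — 6 statements merged into one kernel-verified Lean document; each statement's English description precedes it below -/
import Mathlib

section
/- Let m be a positive integer, let δ ∈ (0, 2/5) be a real number, and let I, J ⊆ {1,…,m} satisfy |I ∩ J| ≤ (5δ/12)·(δm/6). Let b, r ∈ ℝ^m be vectors with b_i − r_i = 2/δ + 1 for every i ∈ I and b_i = r_i for every i ∉ I. Then |∑_{j∈J} (b_j − r_j)| < δm/6. Consequently, with w = (2+δ)m/3, there do not exist integers k, k' ≥ 0 such that one of the two numbers ∑_{j∈J} b_j, ∑_{j∈J} r_j lies in the blue range B_k = [kw + m/3 + δm/6, kw + 2m/3 + δm/6) while the other lies in the red range R_{k'} = [k'w, k'w + m/3). -/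
/-- Lemma 3.2 of the paper: if `|I ∩ J| ≤ (5δ/12)(δm/6)` and `b - r = (2/δ + 1)·1_I`,
then `|∑_{j∈J} (b_j - r_j)| < δm/6`; consequently the `J`-coordinate sums of `b` and `r`
cannot lie one in a blue range and the other in a red range of the colouring
determined by `J`, i.e. no edge of `M_I` is induced by `M_J'`. -/
theorem no_edge_induced (m : ℕ) (hm : 0 < m) (δ : ℝ) (hδ0 : 0 < δ) (hδ : δ < 2 / 5)
    (I J : Finset (Fin m))
    (hIJ : ((I ∩ J).card : ℝ) ≤ (5 * δ / 12) * (δ * m / 6))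
    (b r : Fin m → ℝ)
    (hbrI : ∀ i ∈ I, b i - r i = 2 / δ + 1)
    (hbrI' : ∀ i ∉ I, b i = r i) :
    |∑ j ∈ J, (b j - r j)| < δ * m / 6 ∧
    (¬ ∃ k k' : ℕ,
      ((k * ((2 + δ) * m / 3) + m / 3 + δ * m / 6 ≤ ∑ j ∈ J, b j ∧
        ∑ j ∈ J, b j < k * ((2 + δ) * m / 3) + 2 * m / 3 + δ * m / 6 ∧
        k' * ((2 + δ) * m / 3) ≤ ∑ j ∈ J, r j ∧
        ∑ j ∈ J, r j < k' * ((2 + δ) * m / 3) + m / 3) ∨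
       (k * ((2 + δ) * m / 3) + m / 3 + δ * m / 6 ≤ ∑ j ∈ J, r j ∧
        ∑ j ∈ J, r j < k * ((2 + δ) * m / 3) + 2 * m / 3 + δ * m / 6 ∧
        k' * ((2 + δ) * m / 3) ≤ ∑ j ∈ J, b j ∧
        ∑ j ∈ J, b j < k' * ((2 + δ) * m / 3) + m / 3))) := by
  have hsum : ∑ j ∈ J, (b j - r j) = ((I ∩ J).card : ℝ) * (2 / δ + 1) := by
    have : ∀ j ∈ J, b j - r j = if j ∈ I then 2 / δ + 1 else 0 := by
      intro j _
      by_cases h : j ∈ I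
      · simp [h, hbrI j h]
      · simp [h, sub_eq_zero.2 (hbrI' j h)]
    rw [Finset.sum_congr rfl this, Finset.sum_ite_mem, Finset.sum_const,
      Finset.inter_comm, nsmul_eq_mul]
  have hmpos : (0 : ℝ) < m := by exact_mod_cast hm
  have hpos : (0 : ℝ) ≤ ∑ j ∈ J, (b j - r j) := by
    rw [hsum]
    positivity
  have habs : |∑ j ∈ J, (b j - r j)| < δ * m / 6 := by
    rw [abs_of_nonneg hpos, hsum]
    have h1 : ((I ∩ J).card : ℝ) * (2 / δ + 1) ≤
        (5 * δ / 12) * (δ * m / 6) * (2 / δ + 1) := by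
      apply mul_le_mul_of_nonneg_right hIJ
      positivity
    have h2 : (5 * δ / 12) * (δ * m / 6) * (2 / δ + 1) < δ * m / 6 := by
      have hδne : δ ≠ 0 := ne_of_gt hδ0
      have key : (5 * δ / 12) * (2 / δ + 1) < 1 := by
        rw [mul_add, div_mul_div_comm]
        rw [show 5 * δ * 2 / (12 * δ) = 5 / 6 by field_simp; ring]
        nlinarith
      nlinarith [mul_pos (mul_pos hδ0 hmpos) (by norm_num : (0:ℝ) < 1/6)]
    linarith
  refine ⟨habs, ?_⟩
  rintro ⟨k, k', h | h⟩ <;>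
  · obtain ⟨h1, h2, h3, h4⟩ := h
    have hS : |∑ j ∈ J, b j - ∑ j ∈ J, r j| < δ * m / 6 := by
      rwa [← Finset.sum_sub_distrib]
    rw [abs_lt] at hS
    have hkk' : (k : ℝ) < k' := by nlinarith
    have : (k : ℝ) + 1 ≤ k' := by exact_mod_cast Nat.lt_iff_add_one_le.1 (by exact_mod_cast hkk')
    nlinarith
end

section
/- Let G = (A, B, E) be a bipartite graph with μ(G) ≥ 2, π any ordered finite list (stream) of its edges, p ∈ (0, 1], and d ≥ 1 an integer. Let A' ⊆ A be a random subset where each a ∈ A is included independently with probability p, let H = G[A' ∪ B] be the induced subgraph, and let π_H be the substream of π consisting of the edges of H. Then with probability at least 1 − 2·μ(G)^{−18}, |Greedy_d(π_H)| ≥ (d/(d+p)) · p · μ(G) − 6·√(d · μ(G) · ln μ(G)), where Greedy_d is run with degree bound 1 on the A'-vertices and degree bound d on the B-vertices. -/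
open MeasureTheory

variable {α β : Type*} [DecidableEq α] [DecidableEq β]

/-- `S` is a matching: distinct edges share no endpoint. -/
def IsMatching (M : Finset (α × β)) : Prop :=
  ∀ e ∈ M, ∀ f ∈ M, e ≠ f → e.1 ≠ f.1 ∧ e.2 ≠ f.2

instance (M : Finset (α × β)) : Decidable (IsMatching M) := by
  unfold IsMatching; exact inferInstance

/-- `μ(G)`: maximum size of a matching contained in the edge set `E`. -/
def matchingNumber (E : Finset (α × β)) : ℕ :=
  (E.powerset.filter fun M => IsMatching M).sup Finset.card

/-- degree of `a` on the `A`-side of the edge set `S`. -/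
def degA (S : Finset (α × β)) (a : α) : ℕ := (S.filter fun e => e.1 = a).card

/-- degree of `b` on the `B`-side of the edge set `S`. -/
def degB (S : Finset (α × β)) (b : β) : ℕ := (S.filter fun e => e.2 = b).card

/-- One step of `Greedy_d`: insert edge `e` if its `A`-endpoint is unmatched and
its `B`-endpoint has degree `< d`. -/
def greedyStep (d : ℕ) (S : Finset (α × β)) (e : α × β) : Finset (α × β) :=
  if degA S e.1 = 0 ∧ degB S e.2 < d then insert e S else S

/-- `Greedy_d` run on the stream `π` (degree bound `1` on the `A`-side,
`d` on the `B`-side). -/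
def greedyD (d : ℕ) (π : List (α × β)) : Finset (α × β) :=
  π.foldl (greedyStep d) ∅

/-!
Fix a maximum matching `M` and let `X` be its set of `A`-vertices, `|X| = μ`. A sampled vertex
of `X` is either matched in the greedy output `S` (at most `|S|` of them) or left unmatched. By
Chernoff about `p μ` vertices of `X` are sampled, so it suffices that at most `p |S| / d + t`
sampled ones stay unmatched: then `|S| (1 + p / d) ≥ p μ - 2 t`.

Removing unmatched vertices from `A'` does not change the greedy run, and neither does adding a
set of vertices each of which, added alone, would stay unmatched. Hence the cube `{0,1}^A` splits
into subcubes on which `S` is constant, whose free coordinates are such "latent unmatched"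
vertices of `X`, the sampled unmatched ones being exactly the free coordinates switched on. The
`M`-partner of a latent unmatched vertex is saturated in `S`, so a subcube has at most `|S| / d`
free coordinates, and Chernoff's bound on each subcube finishes the argument. With
`t = 3 √(d μ ln μ)` both tails are at most `μ⁻¹⁸`.
-/

open Finset

section Greedy

variable {d : ℕ}

omit [DecidableEq β] in
theorem degA_mono {S T : Finset (α × β)} (h : S ⊆ T) (a : α) : degA S a ≤ degA T a :=
  card_le_card (filter_subset_filter _ h)

omit [DecidableEq α] in
theorem degB_mono {S T : Finset (α × β)} (h : S ⊆ T) (b : β) : degB S b ≤ degB T b :=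
  card_le_card (filter_subset_filter _ h)

omit [DecidableEq β] in
theorem degA_pos_of_mem {S : Finset (α × β)} {e : α × β} (he : e ∈ S) : 0 < degA S e.1 :=
  card_pos.2 ⟨e, mem_filter.2 ⟨he, rfl⟩⟩

theorem subset_greedyStep (S : Finset (α × β)) (e : α × β) : S ⊆ greedyStep d S e := by
  unfold greedyStep
  split_ifs
  exacts [subset_insert e S, subset_rfl]

theorem subset_foldl_greedyStep (l : List (α × β)) (S : Finset (α × β)) :
    S ⊆ l.foldl (greedyStep d) S := by
  induction l generalizing S with
  | nil => exact subset_rfl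
  | cons e l ih => exact (subset_greedyStep S e).trans (ih _)

theorem greedyStep_eq_self_of_degA_foldl_eq_zero {l : List (α × β)} {S : Finset (α × β)}
    {e : α × β} (h : degA (l.foldl (greedyStep d) (greedyStep d S e)) e.1 = 0) :
    greedyStep d S e = S := by
  unfold greedyStep at h ⊢
  split_ifs at h ⊢
  · exact absurd h (degA_pos_of_mem (subset_foldl_greedyStep l _ (mem_insert_self e S))).ne'
  · rfl

theorem degA_pos_or_le_degB_foldl_greedyStep (l : List (α × β)) (S : Finset (α × β))
    {e : α × β} (he : e ∈ l) :
    0 < degA (l.foldl (greedyStep d) S) e.1 ∨ d ≤ degB (l.foldl (greedyStep d) S) e.2 := by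
  induction l generalizing S with
  | nil => simp at he
  | cons f l ih =>
    rcases List.mem_cons.1 he with rfl | he
    · have hsub := subset_foldl_greedyStep (d := d) l (greedyStep d S e)
      rw [List.foldl_cons]
      by_cases hacc : degA S e.1 = 0 ∧ degB S e.2 < d
      · rw [greedyStep, if_pos hacc] at hsub ⊢
        exact .inl (degA_pos_of_mem (hsub (mem_insert_self e S)))
      · rw [greedyStep, if_neg hacc] at hsub ⊢
        rw [not_and_or, not_lt] at hacc
        exact hacc.imp (fun h => (Nat.pos_of_ne_zero h).trans_le (degA_mono hsub _))
          (fun h => h.trans (degB_mono hsub _))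
    · exact ih _ he

theorem foldl_greedyStep_filter_eq_of_degA_eq_zero {K : Finset α} (l : List (α × β))
    (S : Finset (α × β)) (h : ∀ a ∈ K, degA (l.foldl (greedyStep d) S) a = 0) :
    (l.filter fun e => e.1 ∉ K).foldl (greedyStep d) S = l.foldl (greedyStep d) S := by
  induction l generalizing S with
  | nil => rfl
  | cons e l ih =>
    by_cases he : e.1 ∈ K
    · have hrej : greedyStep d S e = S := greedyStep_eq_self_of_degA_foldl_eq_zero (h e.1 he)
      rw [List.filter_cons_of_neg (by simpa), List.foldl_cons, hrej]
      exact ih S (by simpa [hrej] using h)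
    · rw [List.filter_cons_of_pos (by simpa), List.foldl_cons, List.foldl_cons]
      exact ih _ h

theorem foldl_greedyStep_eq_filter_of_degA_filter_eq_zero {K : Finset α} (l : List (α × β))
    (S : Finset (α × β))
    (h : ∀ a ∈ K,
      degA ((l.filter fun e => e.1 ∉ K ∨ e.1 = a).foldl (greedyStep d) S) a = 0) :
    l.foldl (greedyStep d) S = (l.filter fun e => e.1 ∉ K).foldl (greedyStep d) S := by
  induction l generalizing S with
  | nil => rfl
  | cons e l ih =>
    by_cases he : e.1 ∈ K
    · have hrej : greedyStep d S e = S := by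
        have := h e.1 he
        rw [List.filter_cons_of_pos (by simp)] at this
        exact greedyStep_eq_self_of_degA_foldl_eq_zero this
      rw [List.filter_cons_of_neg (by simpa), List.foldl_cons, hrej]
      refine ih S fun a ha => ?_
      by_cases hea : e.1 = a
      · simpa [List.filter_cons_of_pos, hea, hrej] using h a ha
      · simpa [List.filter_cons_of_neg, he, hea] using h a ha
    · rw [List.filter_cons_of_pos (by simpa), List.foldl_cons, List.foldl_cons]
      exact ih _ fun a ha => by simpa [he] using h a ha

end Greedy

section Sampling

variable (π : List (α × β))

/-- `Greedy_d(π_H)` for `H = G[A' ∪ B]`, where `A' = {a | ω a}`. -/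
def sampledGreedy (d : ℕ) (ω : α → Bool) : Finset (α × β) :=
  greedyD d (π.filter fun e => ω e.1)

def switchOn (K : Finset α) (ω : α → Bool) : α → Bool := fun a => decide (a ∈ K) || ω a

def switchOff (K : Finset α) (ω : α → Bool) : α → Bool := fun a => !decide (a ∈ K) && ω a

@[simp] theorem switchOn_apply (K : Finset α) (ω : α → Bool) (a : α) :
    switchOn K ω a = (decide (a ∈ K) || ω a) := rfl

@[simp] theorem switchOff_apply (K : Finset α) (ω : α → Bool) (a : α) :
    switchOff K ω a = (!decide (a ∈ K) && ω a) := rfl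

theorem switchOn_switchOff {K : Finset α} {ω : α → Bool} (h : ∀ a ∈ K, ω a = true) :
    switchOn K (switchOff K ω) = ω := by
  funext a
  by_cases ha : a ∈ K <;> simp [ha, h]

theorem switchOff_switchOn {K : Finset α} {τ : α → Bool} (h : ∀ a ∈ K, τ a = false) :
    switchOff K (switchOn K τ) = τ := by
  funext a
  by_cases ha : a ∈ K <;> simp [ha, h]

variable {d : ℕ}

theorem sampledGreedy_switchOff {K : Finset α} {ω : α → Bool}
    (h : ∀ a ∈ K, degA (sampledGreedy π d ω) a = 0) :
    sampledGreedy π d (switchOff K ω) = sampledGreedy π d ω := by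
  have hfilter : π.filter (fun e => switchOff K ω e.1) =
      (π.filter fun e => ω e.1).filter fun e => e.1 ∉ K := by
    rw [List.filter_filter]
    exact List.filter_congr fun e _ => by simp [Bool.and_comm]
  rw [sampledGreedy, hfilter]
  exact foldl_greedyStep_filter_eq_of_degA_eq_zero _ _ h

theorem sampledGreedy_switchOn {K : Finset α} {τ : α → Bool} (hK : ∀ a ∈ K, τ a = false)
    (h : ∀ a ∈ K, degA (sampledGreedy π d (switchOn {a} τ)) a = 0) :
    sampledGreedy π d (switchOn K τ) = sampledGreedy π d τ := by
  have hfilter : ∀ a ∈ K, (π.filter fun e => switchOn K τ e.1).filter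
      (fun e => e.1 ∉ K ∨ e.1 = a) = π.filter fun e => switchOn {a} τ e.1 := by
    intro a ha
    rw [List.filter_filter]
    refine List.filter_congr fun e _ => ?_
    by_cases he : e.1 ∈ K
    · by_cases hea : e.1 = a <;> simp [he, hea, hK, ha]
    · have hea : e.1 ≠ a := fun h => he (h ▸ ha)
      simp [he, hea]
  have hτ : (π.filter fun e => switchOn K τ e.1).filter (fun e => e.1 ∉ K) =
      π.filter fun e => τ e.1 := by
    rw [List.filter_filter]
    refine List.filter_congr fun e _ => ?_
    by_cases he : e.1 ∈ K <;> simp [he, hK]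
  rw [sampledGreedy, sampledGreedy, greedyD, greedyD, ← hτ]
  refine foldl_greedyStep_eq_filter_of_degA_filter_eq_zero _ _ fun a ha => ?_
  rw [hfilter a ha]
  exact h a ha

theorem le_degB_sampledGreedy {τ : α → Bool} {e : α × β} (he : e ∈ π)
    (hτ : τ e.1 = false)
    (h : degA (sampledGreedy π d (switchOn {e.1} τ)) e.1 = 0) :
    d ≤ degB (sampledGreedy π d τ) e.2 := by
  have heq := sampledGreedy_switchOn π (K := {e.1}) (by simpa) (by simpa)
  have hmem : e ∈ π.filter fun f => switchOn {e.1} τ f.1 := List.mem_filter.2 ⟨he, by simp⟩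
  rw [← heq]
  exact (degA_pos_or_le_degB_foldl_greedyStep _ ∅ hmem).resolve_left fun hpos => hpos.ne' h

end Sampling

section Counting

omit [DecidableEq α] [DecidableEq β] in
theorem IsMatching.injOn_fst {M : Finset (α × β)} (hM : IsMatching M) :
    Set.InjOn Prod.fst (M : Set (α × β)) :=
  fun e he f hf h => by_contra fun hne => (hM e he f hf hne).1 h

omit [DecidableEq α] [DecidableEq β] in
theorem IsMatching.injOn_snd {M : Finset (α × β)} (hM : IsMatching M) :
    Set.InjOn Prod.snd (M : Set (α × β)) :=
  fun e he f hf h => by_contra fun hne => (hM e he f hf hne).2 h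

theorem exists_isMatching_card_eq_matchingNumber (E : Finset (α × β)) :
    ∃ M ⊆ E, IsMatching M ∧ #M = matchingNumber E := by
  obtain ⟨M, hM, hmax⟩ := exists_mem_eq_sup (E.powerset.filter fun M => IsMatching M)
    ⟨∅, mem_filter.2 ⟨empty_mem_powerset E, by simp [IsMatching]⟩⟩ card
  rw [mem_filter, mem_powerset] at hM
  exact ⟨M, hM.1, hM.2, hmax.symm⟩

omit [DecidableEq β] in
theorem card_filter_degA_pos_le (X : Finset α) (S : Finset (α × β)) :
    #(X.filter fun a => 0 < degA S a) ≤ #S := by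
  refine (card_le_card fun a ha => ?_).trans (card_image_le (f := Prod.fst))
  obtain ⟨e, he⟩ := card_pos.1 (mem_filter.1 ha).2
  exact mem_image.2 ⟨e, (mem_filter.1 he).1, (mem_filter.1 he).2⟩

omit [DecidableEq α] in
theorem mul_card_le_card_of_le_degB {d : ℕ} {S : Finset (α × β)} {F : Finset β}
    (h : ∀ b ∈ F, d ≤ degB S b) : d * #F ≤ #S := by
  have := card_mul_le_card_mul (fun (b : β) (e : α × β) => e.2 = b) (m := d) (n := 1) h
    fun e _ => card_le_one.2 fun b hb b' hb' => (mem_filter.1 hb).2.symm.trans (mem_filter.1 hb').2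
  simpa [mul_comm] using this

end Counting

variable (α) in
/-- A partition of the cube `α → Bool` into the subcubes `{switchOn L τ | L ⊆ free τ}`,
`τ ∈ corners`; the point `ω` lies in the subcube of `corner ω`, at `L = coords ω`. -/
structure SubcubePartition where
  corners : Finset (α → Bool)
  free : (α → Bool) → Finset α
  corner : (α → Bool) → α → Bool
  coords : (α → Bool) → Finset α
  corner_mem (ω : α → Bool) : corner ω ∈ corners
  coords_subset (ω : α → Bool) : coords ω ⊆ free (corner ω)
  switchOn_coords_corner (ω : α → Bool) : switchOn (coords ω) (corner ω) = ω
  corner_switchOn : ∀ τ ∈ corners, ∀ L ⊆ free τ, corner (switchOn L τ) = τ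
  coords_switchOn : ∀ τ ∈ corners, ∀ L ⊆ free τ, coords (switchOn L τ) = L
  eq_false_of_mem_free : ∀ τ ∈ corners, ∀ a ∈ free τ, τ a = false

section Weights

variable [Fintype α] {p : ℝ}

def weight (p : ℝ) (ω : α → Bool) : ℝ := ∏ a, if ω a then p else 1 - p

omit [DecidableEq α] in
theorem weight_nonneg (hp0 : 0 ≤ p) (hp1 : p ≤ 1) (ω : α → Bool) : 0 ≤ weight p ω :=
  prod_nonneg fun a _ => by split_ifs <;> linarith

theorem sum_weight (p : ℝ) : ∑ ω : α → Bool, weight p ω = 1 := by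
  have h := Fintype.prod_sum fun (_ : α) (b : Bool) => if b then p else 1 - p
  simp only [Fintype.sum_bool, if_true, Bool.false_eq_true, if_false, add_sub_cancel,
    prod_const_one] at h
  exact h.symm

theorem weight_switchOn {K L : Finset α} {τ : α → Bool} (hτ : ∀ a ∈ K, τ a = false)
    (hL : L ⊆ K) :
    weight p (switchOn L τ) =
      (∏ a ∈ Kᶜ, if τ a then p else 1 - p) * (p ^ #L * (1 - p) ^ (#K - #L)) := by
  rw [weight, ← prod_mul_prod_compl K, mul_comm]
  congr 1
  · refine prod_congr rfl fun a ha => ?_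
    have : a ∉ L := fun h => mem_compl.1 ha (hL h)
    simp [this]
  · have hK : ∏ a ∈ K, (if switchOn L τ a then p else 1 - p) =
        ∏ a ∈ K, if a ∈ L then p else 1 - p :=
      prod_congr rfl fun a ha => by simp [hτ a ha]
    have hcard : #(K.filter fun a => a ∉ L) = #K - #L := by
      rw [filter_not, filter_mem_eq_inter, inter_eq_right.2 hL, card_sdiff_of_subset hL]
    rw [hK, prod_ite, prod_const, prod_const, filter_mem_eq_inter, inter_eq_right.2 hL, hcard]

namespace SubcubePartition

variable (C : SubcubePartition α)

theorem sum_eq {M : Type*} [AddCommMonoid M] (f : (α → Bool) → M) :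
    ∑ ω, f ω = ∑ τ ∈ C.corners, ∑ L ∈ (C.free τ).powerset, f (switchOn L τ) := by
  rw [sum_sigma']
  refine sum_bij' (fun ω _ => ⟨C.corner ω, C.coords ω⟩) (fun x _ => switchOn x.2 x.1)
    (fun ω _ => mem_sigma.2 ⟨C.corner_mem ω, mem_powerset.2 (C.coords_subset ω)⟩)
    (fun _ _ => mem_univ _) (fun ω _ => C.switchOn_coords_corner ω) (fun x hx => ?_)
    (fun ω _ => by rw [C.switchOn_coords_corner])
  obtain ⟨hτ, hL⟩ := mem_sigma.1 hx
  exact Sigma.ext (C.corner_switchOn _ hτ _ (mem_powerset.1 hL))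
    (heq_of_eq (C.coords_switchOn _ hτ _ (mem_powerset.1 hL)))

/-- Conditioned on each subcube, the coordinates in `free τ` are independent Bernoulli
variables; so a bound on every conditional probability bounds the probability. -/
theorem sum_weight_filter_le {ε : ℝ} (hp0 : 0 ≤ p) (hp1 : p ≤ 1) (E : (α → Bool) → Prop)
    [DecidablePred E]
    (hE : ∀ τ ∈ C.corners, ∑ L ∈ (C.free τ).powerset with E (switchOn L τ),
      p ^ #L * (1 - p) ^ (#(C.free τ) - #L) ≤ ε) :
    ∑ ω with E ω, weight p ω ≤ ε := by
  set rest : (α → Bool) → ℝ := fun τ => ∏ a ∈ (C.free τ)ᶜ, if τ a then p else 1 - p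
  have hfiber : ∀ τ ∈ C.corners, ∀ L ∈ (C.free τ).powerset, weight p (switchOn L τ) =
      rest τ * (p ^ #L * (1 - p) ^ (#(C.free τ) - #L)) := fun τ hτ L hL =>
    weight_switchOn (C.eq_false_of_mem_free τ hτ) (mem_powerset.1 hL)
  have hrest : ∑ τ ∈ C.corners, rest τ = 1 := by
    rw [← sum_weight (α := α) p, C.sum_eq]
    refine sum_congr rfl fun τ hτ => ?_
    rw [sum_congr rfl (hfiber τ hτ), ← mul_sum, sum_pow_mul_eq_add_pow, add_sub_cancel,
      one_pow, mul_one]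
  calc ∑ ω with E ω, weight p ω
      = ∑ τ ∈ C.corners, rest τ * ∑ L ∈ (C.free τ).powerset with E (switchOn L τ),
          p ^ #L * (1 - p) ^ (#(C.free τ) - #L) := by
        rw [sum_filter, C.sum_eq]
        refine sum_congr rfl fun τ hτ => ?_
        rw [sum_filter, mul_sum]
        refine sum_congr rfl fun L hL => ?_
        rw [hfiber τ hτ L hL]
        split_ifs <;> simp
    _ ≤ ∑ τ ∈ C.corners, rest τ * ε :=
        sum_le_sum fun τ hτ => mul_le_mul_of_nonneg_left (hE τ hτ)
          (prod_nonneg fun a _ => by split_ifs <;> linarith)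
    _ = ε := by rw [← sum_mul, hrest, one_mul]

end SubcubePartition

end Weights

section Chernoff

open Real

variable {p : ℝ}

theorem toMeasure_bernoulli_singleton (hp0 : 0 ≤ p) (hp1 : p ≤ 1) (b : Bool) :
    (PMF.bernoulli (Real.toNNReal p) (Real.toNNReal_le_one.mpr hp1)).toMeasure {b} =
      ENNReal.ofReal (if b then p else 1 - p) := by
  rw [PMF.toMeasure_apply_singleton _ _ (measurableSet_singleton _), PMF.bernoulli_apply]
  cases b <;> simp [ENNReal.ofReal_sub 1 hp0] <;> rfl

theorem bernoulli_mgf_le (hp0 : 0 ≤ p) (hp1 : p ≤ 1) (l : ℝ) :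
    p * exp (l * (1 - p)) + (1 - p) * exp (-(l * p)) ≤ exp (l ^ 2 / 8) := by
  set ν := (PMF.bernoulli (Real.toNNReal p) (Real.toNNReal_le_one.mpr hp1)).toMeasure
  have hν : ∀ f : Bool → ℝ, ∫ b, f b ∂ν = p * f true + (1 - p) * f false := fun f => by
    rw [integral_fintype .of_finite]
    simp [ν, Measure.real, toMeasure_bernoulli_singleton hp0 hp1, hp0, sub_nonneg.2 hp1]
  set X : Bool → ℝ := fun b => (if b then 1 else 0) - p
  have hX : ∀ b, X b ∈ Set.Icc (-p) (1 - p) := fun b => by cases b <;> simp [X]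
  have h := (ProbabilityTheory.hasSubgaussianMGF_of_mem_Icc_of_integral_eq_zero
    Measurable.of_discrete.aemeasurable (ae_of_all ν hX) (by rw [hν]; simp [X]; ring)).mgf_le l
  rw [ProbabilityTheory.mgf, hν] at h
  convert h using 2
  · simp [X]
  · simp [X]
  · norm_num
    ring

variable {γ : Type*}

theorem sum_powerset_mul_exp_le (K : Finset γ) (hp0 : 0 ≤ p) (hp1 : p ≤ 1) (l : ℝ) :
    ∑ L ∈ K.powerset, p ^ #L * (1 - p) ^ (#K - #L) * exp (l * (#L - p * #K)) ≤
      exp (#K * l ^ 2 / 8) := by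
  have hterm : ∀ L ∈ K.powerset, p ^ #L * (1 - p) ^ (#K - #L) * exp (l * (#L - p * #K)) =
      (p * exp (l * (1 - p))) ^ #L * ((1 - p) * exp (-(l * p))) ^ (#K - #L) := by
    intro L hL
    have hcast : ((#K - #L : ℕ) : ℝ) = #K - #L :=
      Nat.cast_sub (card_le_card (mem_powerset.1 hL))
    rw [mul_pow, mul_pow, ← exp_nat_mul, ← exp_nat_mul, hcast]
    have : l * (#L - p * #K) = #L * (l * (1 - p)) + (#K - #L) * -(l * p) := by ring
    rw [this, exp_add]
    ring
  rw [sum_congr rfl hterm, sum_pow_mul_eq_add_pow]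
  calc (p * exp (l * (1 - p)) + (1 - p) * exp (-(l * p))) ^ #K
      ≤ exp (l ^ 2 / 8) ^ #K :=
        pow_le_pow_left₀ (by have := sub_nonneg.2 hp1; positivity) (bernoulli_mgf_le hp0 hp1 l) _
    _ = exp (#K * l ^ 2 / 8) := by rw [← exp_nat_mul, mul_div_assoc]

theorem sum_powerset_filter_le_exp (K : Finset γ) (hp0 : 0 ≤ p) (hp1 : p ≤ 1) {l θ : ℝ}
    (P : Finset γ → Prop) [DecidablePred P] (hP : ∀ L, P L → θ ≤ l * (#L - p * #K)) :
    ∑ L ∈ K.powerset with P L, p ^ #L * (1 - p) ^ (#K - #L) ≤ exp (#K * l ^ 2 / 8 - θ) := by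
  have hw : ∀ L : Finset γ, 0 ≤ p ^ #L * (1 - p) ^ (#K - #L) := fun L => by
    have := sub_nonneg.2 hp1; positivity
  calc ∑ L ∈ K.powerset with P L, p ^ #L * (1 - p) ^ (#K - #L)
      ≤ ∑ L ∈ K.powerset with P L,
          p ^ #L * (1 - p) ^ (#K - #L) * exp (l * (#L - p * #K)) * exp (-θ) :=
        sum_le_sum fun L hL => by
          rw [mul_assoc, ← exp_add]
          refine le_mul_of_one_le_right (hw L) (one_le_exp ?_)
          linarith [hP L (mem_filter.1 hL).2]
    _ ≤ ∑ L ∈ K.powerset,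
          p ^ #L * (1 - p) ^ (#K - #L) * exp (l * (#L - p * #K)) * exp (-θ) :=
        sum_le_sum_of_subset_of_nonneg (filter_subset _ _) fun L _ _ => by
          have := hw L; positivity
    _ ≤ exp (#K * l ^ 2 / 8) * exp (-θ) := by
        rw [← sum_mul]
        exact mul_le_mul_of_nonneg_right (sum_powerset_mul_exp_le K hp0 hp1 l) (exp_pos _).le
    _ = exp (#K * l ^ 2 / 8 - θ) := by rw [← exp_add, sub_eq_add_neg]

/-- The exponent obtained from `l = ± 4 t / n`. -/
theorem card_mul_sq_div_eight_sub_le {k n : ℕ} (hn : 0 < n) (hk : k ≤ n) (t : ℝ) :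
    k * (4 * t / n) ^ 2 / 8 - 4 * t ^ 2 / n ≤ -2 * t ^ 2 / n := by
  have hn' : (0 : ℝ) < n := by exact_mod_cast hn
  have hk' : (k : ℝ) ≤ n := by exact_mod_cast hk
  rw [← sub_nonneg]
  have : -2 * t ^ 2 / n - (k * (4 * t / n) ^ 2 / 8 - 4 * t ^ 2 / n) =
      2 * t ^ 2 * (n - k) / n ^ 2 := by
    field_simp
    ring
  rw [this]
  have := sub_nonneg.2 hk'
  positivity

theorem sum_powerset_filter_lt_card_le (K : Finset γ) (hp0 : 0 ≤ p) (hp1 : p ≤ 1)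
    {s t : ℝ} {n : ℕ} (hn : 0 < n) (hK : #K ≤ n) (ht : 0 ≤ t) (hs : p * #K + t ≤ s) :
    ∑ L ∈ K.powerset with s < #L, p ^ #L * (1 - p) ^ (#K - #L) ≤ exp (-2 * t ^ 2 / n) := by
  refine (sum_powerset_filter_le_exp K hp0 hp1 (l := 4 * t / n) (θ := 4 * t ^ 2 / n) _
    fun L hL => ?_).trans (exp_le_exp.2 (card_mul_sq_div_eight_sub_le hn hK t))
  have : 4 * t ^ 2 / n = 4 * t / n * t := by ring
  rw [this]
  exact mul_le_mul_of_nonneg_left (by linarith) (by positivity)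

theorem sum_powerset_filter_card_lt_le (K : Finset γ) (hp0 : 0 ≤ p) (hp1 : p ≤ 1)
    {s t : ℝ} {n : ℕ} (hn : 0 < n) (hK : #K ≤ n) (ht : 0 ≤ t) (hs : s ≤ p * #K - t) :
    ∑ L ∈ K.powerset with (#L : ℝ) < s, p ^ #L * (1 - p) ^ (#K - #L) ≤
      exp (-2 * t ^ 2 / n) := by
  refine (sum_powerset_filter_le_exp K hp0 hp1 (l := -(4 * t / n)) (θ := 4 * t ^ 2 / n) _
    fun L hL => ?_).trans (exp_le_exp.2 (by simpa using card_mul_sq_div_eight_sub_le hn hK t))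
  have : 4 * t ^ 2 / n = -(4 * t / n) * -t := by ring
  rw [this]
  exact mul_le_mul_of_nonpos_left (by linarith) (by simp only [neg_nonpos]; positivity)

end Chernoff

section Partitions

variable (π : List (α × β)) (d : ℕ) (X : Finset α)

def sampledUnmatched (ω : α → Bool) : Finset α :=
  X.filter fun a => ω a = true ∧ degA (sampledGreedy π d ω) a = 0

def latentUnmatched (τ : α → Bool) : Finset α :=
  X.filter fun a => τ a = false ∧ degA (sampledGreedy π d (switchOn {a} τ)) a = 0

variable {π d X}

theorem sampledGreedy_switchOff_sampledUnmatched (ω : α → Bool) :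
    sampledGreedy π d (switchOff (sampledUnmatched π d X ω) ω) = sampledGreedy π d ω :=
  sampledGreedy_switchOff π fun _ ha => (mem_filter.1 ha).2.2

theorem sampledGreedy_switchOn_of_subset_latentUnmatched {τ : α → Bool} {L : Finset α}
    (hL : L ⊆ latentUnmatched π d X τ) :
    sampledGreedy π d (switchOn L τ) = sampledGreedy π d τ :=
  sampledGreedy_switchOn π (fun _ ha => (mem_filter.1 (hL ha)).2.1)
    fun _ ha => (mem_filter.1 (hL ha)).2.2

theorem sampledUnmatched_switchOff (ω : α → Bool) :
    sampledUnmatched π d X (switchOff (sampledUnmatched π d X ω) ω) = ∅ := by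
  set U := sampledUnmatched π d X ω
  refine eq_empty_of_forall_notMem fun a ha => ?_
  rw [sampledUnmatched, mem_filter, sampledGreedy_switchOff_sampledUnmatched] at ha
  have hωa : a ∉ U ∧ ω a = true := by simpa using ha.2.1
  exact hωa.1 (mem_filter.2 ⟨ha.1, hωa.2, ha.2.2⟩)

theorem sampledUnmatched_subset_latentUnmatched (ω : α → Bool) :
    sampledUnmatched π d X ω ⊆
      latentUnmatched π d X (switchOff (sampledUnmatched π d X ω) ω) := by
  intro a ha
  obtain ⟨haX, hωa, hdeg⟩ := mem_filter.1 ha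
  have hswitch : switchOn {a} (switchOff (sampledUnmatched π d X ω) ω) =
      switchOff (sampledUnmatched π d X ω \ {a}) ω := by
    funext b
    by_cases hb : b = a
    · simp [hb, hωa]
    · simp [hb]
  refine mem_filter.2 ⟨haX, by simp [ha], ?_⟩
  rw [hswitch, sampledGreedy_switchOff π fun b hb => (mem_filter.1 (mem_sdiff.1 hb).1).2.2]
  exact hdeg

theorem sampledUnmatched_switchOn {τ : α → Bool} (hτ : sampledUnmatched π d X τ = ∅)
    {L : Finset α} (hL : L ⊆ latentUnmatched π d X τ) :
    sampledUnmatched π d X (switchOn L τ) = L := by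
  ext a
  rw [sampledUnmatched, mem_filter, sampledGreedy_switchOn_of_subset_latentUnmatched hL]
  constructor
  · rintro ⟨haX, hon, hdeg⟩
    by_contra haL
    have hτa : τ a = true := by simpa [haL] using hon
    exact notMem_empty a (hτ ▸ mem_filter.2 ⟨haX, hτa, hdeg⟩)
  · intro haL
    obtain ⟨haX, -, hdeg⟩ := mem_filter.1 (hL haL)
    rw [sampledGreedy_switchOn_of_subset_latentUnmatched (singleton_subset_iff.2 (hL haL))]
      at hdeg
    exact ⟨haX, by simp [haL], hdeg⟩

variable [Fintype α]

variable (π d X) in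
def unmatchedPartition : SubcubePartition α where
  corners := univ.filter fun τ => sampledUnmatched π d X τ = ∅
  free := latentUnmatched π d X
  corner ω := switchOff (sampledUnmatched π d X ω) ω
  coords := sampledUnmatched π d X
  corner_mem ω := mem_filter.2 ⟨mem_univ _, sampledUnmatched_switchOff ω⟩
  coords_subset := sampledUnmatched_subset_latentUnmatched
  switchOn_coords_corner ω := switchOn_switchOff fun _ ha => (mem_filter.1 ha).2.1
  corner_switchOn τ hτ L hL := by
    rw [sampledUnmatched_switchOn (mem_filter.1 hτ).2 hL]
    exact switchOff_switchOn fun _ ha => (mem_filter.1 (hL ha)).2.1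
  coords_switchOn τ hτ _ hL := sampledUnmatched_switchOn (mem_filter.1 hτ).2 hL
  eq_false_of_mem_free _ _ _ ha := (mem_filter.1 ha).2.1

variable (X) in
def samplePartition : SubcubePartition α where
  corners := univ.filter fun τ => ∀ a ∈ X, τ a = false
  free _ := X
  corner := switchOff X
  coords ω := X.filter fun a => ω a
  corner_mem ω := mem_filter.2 ⟨mem_univ _, fun a ha => by simp [ha]⟩
  coords_subset _ := filter_subset _ _
  switchOn_coords_corner ω := by
    funext a
    by_cases ha : a ∈ X <;> cases hω : ω a <;> simp [ha, hω]
  corner_switchOn τ hτ L hL := by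
    funext a
    by_cases ha : a ∈ X
    · simp [ha, (mem_filter.1 hτ).2 a ha]
    · have haL : a ∉ L := fun h => ha (hL h)
      simp [ha, haL]
  coords_switchOn τ hτ L hL := by
    ext a
    by_cases ha : a ∈ L
    · simp [ha, hL ha]
    · simpa [ha] using (mem_filter.1 hτ).2 a
  eq_false_of_mem_free τ hτ := (mem_filter.1 hτ).2

end Partitions

section Bounds

variable {π : List (α × β)} {d : ℕ} {M : Finset (α × β)}

theorem mul_card_latentUnmatched_le (hMπ : M ⊆ π.toFinset) (hM : IsMatching M)
    (τ : α → Bool) :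
    d * #(latentUnmatched π d (M.image Prod.fst) τ) ≤ #(sampledGreedy π d τ) := by
  set M' := M.filter fun e => e.1 ∈ latentUnmatched π d (M.image Prod.fst) τ
  have hlatent : #(latentUnmatched π d (M.image Prod.fst) τ) ≤ #M' := by
    refine (card_le_card fun a ha => ?_).trans (card_image_le (f := Prod.fst))
    obtain ⟨e, he, rfl⟩ := mem_image.1 (mem_filter.1 ha).1
    exact mem_image_of_mem _ (mem_filter.2 ⟨he, ha⟩)
  have hsnd : #(M'.image Prod.snd) = #M' :=
    card_image_of_injOn (hM.injOn_snd.mono (coe_subset.2 (filter_subset _ _)))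
  refine (Nat.mul_le_mul_left d hlatent).trans (hsnd ▸ mul_card_le_card_of_le_degB ?_)
  rintro b hb
  obtain ⟨e, he, rfl⟩ := mem_image.1 hb
  obtain ⟨heM, hlat⟩ := mem_filter.1 he
  obtain ⟨-, hτ, hdeg⟩ := mem_filter.1 hlat
  exact le_degB_sampledGreedy π (List.mem_toFinset.1 (hMπ heM)) hτ hdeg

theorem card_filter_le_card_add_card_sampledUnmatched (X : Finset α) (ω : α → Bool) :
    #(X.filter fun a => ω a) ≤ #(sampledGreedy π d ω) + #(sampledUnmatched π d X ω) := by
  refine (card_le_card fun a ha => ?_).trans ((card_union_le _ _).trans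
    (Nat.add_le_add_right (card_filter_degA_pos_le X _) _))
  obtain ⟨haX, hωa⟩ := mem_filter.1 ha
  by_cases hdeg : degA (sampledGreedy π d ω) a = 0
  · exact mem_union_right _ (mem_filter.2 ⟨haX, hωa, hdeg⟩)
  · exact mem_union_left _ (mem_filter.2 ⟨haX, Nat.pos_of_ne_zero hdeg⟩)

theorem le_card_sampledGreedy {X : Finset α} {ω : α → Bool} {p μ t : ℝ} (hd : 0 < d)
    (hp : 0 ≤ p) (ht : 0 ≤ t) (hX : p * μ - t ≤ #(X.filter fun a => ω a))
    (hU : #(sampledUnmatched π d X ω) ≤ p * #(sampledGreedy π d ω) / d + t) :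
    d / (d + p) * p * μ - 2 * t ≤ #(sampledGreedy π d ω) := by
  have hcount : (#(X.filter fun a => ω a) : ℝ) ≤
      #(sampledGreedy π d ω) + #(sampledUnmatched π d X ω) := by
    exact_mod_cast card_filter_le_card_add_card_sampledUnmatched X ω
  have hd' : (0 : ℝ) < d := by exact_mod_cast hd
  have hdp : (0 : ℝ) < d + p := by linarith
  have hdiv : p * #(sampledGreedy π d ω) / d * d = p * #(sampledGreedy π d ω) := by
    field_simp
  rw [sub_le_iff_le_add, div_mul_eq_mul_div, div_mul_eq_mul_div, div_le_iff₀ hdp]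
  nlinarith [mul_le_mul_of_nonneg_right (hX.trans hcount) hd'.le,
    mul_le_mul_of_nonneg_right hU hd'.le, mul_nonneg ht hp, hdiv]

variable [Fintype α] {p t : ℝ}

theorem sum_weight_card_filter_lt_le (hp0 : 0 ≤ p) (hp1 : p ≤ 1) (ht : 0 ≤ t) {X : Finset α}
    (hX : 0 < #X) :
    ∑ ω with (#(X.filter fun a => ω a) : ℝ) < p * #X - t, weight p ω ≤
      Real.exp (-2 * t ^ 2 / #X) := by
  refine (samplePartition X).sum_weight_filter_le hp0 hp1 _ fun τ hτ => ?_
  rw [filter_congr fun L hL => by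
    have hcoords : X.filter (fun a => switchOn L τ a) = L :=
      (samplePartition X).coords_switchOn τ hτ L (mem_powerset.1 hL)
    rw [hcoords]]
  exact sum_powerset_filter_card_lt_le X hp0 hp1 hX le_rfl ht le_rfl

theorem sum_weight_card_sampledUnmatched_gt_le (hp0 : 0 ≤ p) (hp1 : p ≤ 1) (ht : 0 ≤ t)
    (hd : 0 < d) (hMπ : M ⊆ π.toFinset) (hM : IsMatching M) (hM0 : 0 < #M) :
    ∑ ω with p * #(sampledGreedy π d ω) / d + t <
        #(sampledUnmatched π d (M.image Prod.fst) ω), weight p ω ≤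
      Real.exp (-2 * t ^ 2 / #M) := by
  set X := M.image Prod.fst
  refine (unmatchedPartition π d X).sum_weight_filter_le hp0 hp1 _ fun τ hτ => ?_
  have hK : latentUnmatched π d X τ = (unmatchedPartition π d X).free τ := rfl
  rw [← hK, filter_congr fun L hL => by
    rw [sampledGreedy_switchOn_of_subset_latentUnmatched (mem_powerset.1 hL),
      sampledUnmatched_switchOn (mem_filter.1 hτ).2 (mem_powerset.1 hL)]]
  refine sum_powerset_filter_lt_card_le _ hp0 hp1 hM0
    ((card_le_card (filter_subset _ _)).trans card_image_le) ht ?_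
  have hd' : (0 : ℝ) < d := by exact_mod_cast hd
  have hsat : (d : ℝ) * #(latentUnmatched π d X τ) ≤ #(sampledGreedy π d τ) := by
    exact_mod_cast mul_card_latentUnmatched_le hMπ hM τ
  rw [mul_div_assoc, add_le_add_iff_right]
  exact mul_le_mul_of_nonneg_left ((le_div_iff₀ hd').2 (by linarith)) hp0

end Bounds

section Probability

variable [Fintype α] {p : ℝ}

theorem pi_bernoulli_setOf (hp0 : 0 ≤ p) (hp1 : p ≤ 1) (P : (α → Bool) → Prop)
    [DecidablePred P] :
    Measure.pi (fun _ : α =>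
        (PMF.bernoulli (Real.toNNReal p) (Real.toNNReal_le_one.mpr hp1)).toMeasure) {ω | P ω} =
      ENNReal.ofReal (∑ ω with P ω, weight p ω) := by
  rw [← coe_filter_univ, ← sum_measure_singleton,
    ENNReal.ofReal_sum_of_nonneg fun ω _ => weight_nonneg hp0 hp1 ω]
  refine sum_congr rfl fun ω _ => ?_
  rw [← Set.univ_pi_singleton, Measure.pi_pi, weight,
    ENNReal.ofReal_prod_of_nonneg fun a _ => by split_ifs <;> linarith]
  simp_rw [toMeasure_bernoulli_singleton hp0 hp1]

theorem one_sub_two_mul_le_sum_weight_filter (hp0 : 0 ≤ p) (hp1 : p ≤ 1)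
    {P Q R : (α → Bool) → Prop} [DecidablePred P] [DecidablePred Q] [DecidablePred R]
    {ε : ℝ}
    (hQ : ∑ ω with Q ω, weight p ω ≤ ε) (hR : ∑ ω with R ω, weight p ω ≤ ε)
    (h : ∀ ω, ¬ P ω → Q ω ∨ R ω) :
    1 - 2 * ε ≤ ∑ ω with P ω, weight p ω := by
  have hsplit := sum_filter_add_sum_filter_not univ P (weight p)
  rw [sum_weight] at hsplit
  have hunion := sum_union_inter (s₁ := univ.filter Q) (s₂ := univ.filter R) (f := weight p)
  have hnotP : ∑ ω with ¬ P ω, weight p ω ≤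
      ∑ ω ∈ univ.filter Q ∪ univ.filter R, weight p ω :=
    sum_le_sum_of_subset_of_nonneg (fun ω hω => by simpa using h ω (mem_filter.1 hω).2)
      fun ω _ _ => weight_nonneg hp0 hp1 ω
  have hinter : 0 ≤ ∑ ω ∈ univ.filter Q ∩ univ.filter R, weight p ω :=
    sum_nonneg fun ω _ => weight_nonneg hp0 hp1 ω
  linarith

theorem exp_neg_two_mul_sq_div_le {n d : ℕ} (hn : 1 ≤ n) (hd : 1 ≤ d) :
    Real.exp (-2 * (3 * √(d * n * Real.log n)) ^ 2 / n) ≤ 1 / n ^ 18 := by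
  have hn' : (1 : ℝ) ≤ n := by exact_mod_cast hn
  have hd' : (1 : ℝ) ≤ d := by exact_mod_cast hd
  have hlog : 0 ≤ Real.log n := Real.log_nonneg hn'
  have hexp : -2 * (3 * √(d * n * Real.log n)) ^ 2 / n = -(18 * d * Real.log n) := by
    rw [mul_pow, Real.sq_sqrt (by positivity)]
    field_simp
    ring
  have hpow : Real.exp (18 * Real.log n) = n ^ 18 := by
    rw [show (18 : ℝ) * Real.log n = Real.log (n ^ 18) by rw [Real.log_pow]; norm_num,
      Real.exp_log (by positivity)]
  rw [hexp, one_div, ← hpow, ← Real.exp_neg, Real.exp_le_exp, neg_le_neg_iff]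
  nlinarith

end Probability

theorem greedyD_size_high_probability_general {α β : Type*} [Fintype α]
    [DecidableEq α] [DecidableEq β]
    (π : List (α × β))
    (hμ : 2 ≤ matchingNumber π.toFinset)
    (p : ℝ) (hp0 : 0 < p) (hp1 : p ≤ 1) (d : ℕ) (hd : 1 ≤ d) :
    ENNReal.ofReal (1 - 2 / (matchingNumber π.toFinset : ℝ) ^ 18) ≤
      (Measure.pi fun _ : α =>
          (PMF.bernoulli (Real.toNNReal p) (Real.toNNReal_le_one.mpr hp1)).toMeasure)
        {ω : α → Bool |
          (d / (d + p)) * p * (matchingNumber π.toFinset : ℝ) -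
              6 * Real.sqrt (d * (matchingNumber π.toFinset) *
                Real.log (matchingNumber π.toFinset)) ≤
            ((greedyD d (π.filter fun e => ω e.1)).card : ℝ)} := by
  classical
  obtain ⟨M, hMπ, hM, hMcard⟩ := exists_isMatching_card_eq_matchingNumber π.toFinset
  rw [← hMcard] at hμ ⊢
  set t := 3 * √(d * #M * Real.log #M)
  have ht : 0 ≤ t := by positivity
  have hε := exp_neg_two_mul_sq_div_le (n := #M) (by omega) hd
  have hX : #(M.image Prod.fst) = #M := card_image_of_injOn hM.injOn_fst
  have hlow := sum_weight_card_filter_lt_le hp0.le hp1 ht (X := M.image Prod.fst) (by omega)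
  rw [hX] at hlow
  rw [pi_bernoulli_setOf hp0.le hp1, ← mul_one_div]
  refine ENNReal.ofReal_le_ofReal (one_sub_two_mul_le_sum_weight_filter hp0.le hp1 (hlow.trans hε)
    ((sum_weight_card_sampledUnmatched_gt_le hp0.le hp1 ht hd hMπ hM (by omega)).trans hε)
    fun ω hω => by_contra fun hgood => hω ?_)
  rw [not_or, not_lt, not_lt] at hgood
  have hsize := le_card_sampledGreedy hd hp0.le ht hgood.1 hgood.2
  rwa [show 2 * t = 6 * √(d * #M * Real.log #M) by ring] at hsize

/-- Lemma 4.2 of the paper (with the explicit deviation term from the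
Azuma–Hoeffding argument): with probability at least `1 − 2·μ(G)^{−18}` over the
random subset `A'` (each `a ∈ A` included independently with probability `p`),
`|Greedy_d(π_H)| ≥ (d/(d+p))·p·μ(G) − 6·√(d·μ(G)·ln μ(G))`. -/
theorem greedyD_size_high_probability {α β : Type*} [Fintype α] [Fintype β]
    [DecidableEq α] [DecidableEq β]
    (π : List (α × β)) (hnodup : π.Nodup)
    (hμ : 2 ≤ matchingNumber π.toFinset)
    (p : ℝ) (hp0 : 0 < p) (hp1 : p ≤ 1) (d : ℕ) (hd : 1 ≤ d) :
    ENNReal.ofReal (1 - 2 / (matchingNumber π.toFinset : ℝ) ^ 18) ≤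
      (Measure.pi fun _ : α =>
          (PMF.bernoulli (Real.toNNReal p) (Real.toNNReal_le_one.mpr hp1)).toMeasure)
        {ω : α → Bool |
          (d / (d + p)) * p * (matchingNumber π.toFinset : ℝ) -
              6 * Real.sqrt (d * (matchingNumber π.toFinset) *
                Real.log (matchingNumber π.toFinset)) ≤
            ((greedyD d (π.filter fun e => ω e.1)).card : ℝ)} :=
  greedyD_size_high_probability_general π hμ p hp0 hp1 d hd
end

section
/- Let G = (A, B, E) be a bipartite graph and let M be a maximal matching in G. Let G_L = G[A(M) ∪ (B ∖ B(M))] and G_R = G[(A ∖ A(M)) ∪ B(M)], where A(M) and B(M) denote the sets of A-endpoints and B-endpoints of the edges of M. Then μ(G_L) + μ(G_R) ≥ 2·(μ(G) − |M|). -/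
variable {α β : Type*} [DecidableEq α] [DecidableEq β]

lemma le_matchingNumber {E N : Finset (α × β)} (h : N ⊆ E) (hm : IsMatching N) :
    N.card ≤ matchingNumber E :=
  Finset.le_sup (by simp [Finset.mem_filter, Finset.mem_powerset, h, hm])

lemma IsMatching.subset {N N' : Finset (α × β)} (h : N' ⊆ N) (hm : IsMatching N) :
    IsMatching N' := fun e he f hf hef => hm e (h he) f (h hf) hef

/-- Inequality (2) in the proof of Lemma 4.3: for a maximal matching `M` of a
bipartite graph `G = (A,B,E)`, with `G_L = G[A(M) ∪ (B ∖ B(M))]` and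
`G_R = G[(A ∖ A(M)) ∪ B(M)]`, one has `μ(G_L) + μ(G_R) ≥ 2(μ(G) − |M|)`. -/
theorem subgraph_matching_sum (E M : Finset (α × β))
    (hME : M ⊆ E) (hmatch : IsMatching M)
    (hmax : ∀ e ∈ E, e ∉ M → ∃ f ∈ M, e.1 = f.1 ∨ e.2 = f.2) :
    2 * ((matchingNumber E : ℤ) - M.card) ≤
      (matchingNumber (E.filter fun e =>
          e.1 ∈ M.image Prod.fst ∧ e.2 ∉ M.image Prod.snd) : ℤ) +
      (matchingNumber (E.filter fun e =>
          e.1 ∉ M.image Prod.fst ∧ e.2 ∈ M.image Prod.snd) : ℤ) := by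
  classical
  obtain ⟨N, hN, hNcard⟩ := Finset.exists_mem_eq_sup
    (E.powerset.filter fun M => IsMatching M)
    ⟨∅, by simp [IsMatching]⟩ Finset.card
  simp only [Finset.mem_filter, Finset.mem_powerset] at hN
  obtain ⟨hNE, hNmatch⟩ := hN
  set A := M.image Prod.fst with hA
  set B := M.image Prod.snd with hB
  -- edges of N avoiding B(M) lie in G_L
  have hLsub : N.filter (fun e => e.2 ∉ B) ⊆
      E.filter fun e => e.1 ∈ A ∧ e.2 ∉ B := by
    intro e he
    simp only [Finset.mem_filter] at he ⊢
    obtain ⟨heN, heB⟩ := he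
    refine ⟨hNE heN, ?_, heB⟩
    by_cases heM : e ∈ M
    · exact Finset.mem_image_of_mem _ heM
    · obtain ⟨f, hfM, hcase⟩ := hmax e (hNE heN) heM
      rcases hcase with h1 | h2
      · exact h1 ▸ Finset.mem_image_of_mem _ hfM
      · exact absurd (h2 ▸ Finset.mem_image_of_mem Prod.snd hfM) heB
  -- edges of N avoiding A(M) lie in G_R
  have hRsub : N.filter (fun e => e.1 ∉ A) ⊆
      E.filter fun e => e.1 ∉ A ∧ e.2 ∈ B := by
    intro e he
    simp only [Finset.mem_filter] at he ⊢
    obtain ⟨heN, heA⟩ := he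
    refine ⟨hNE heN, heA, ?_⟩
    by_cases heM : e ∈ M
    · exact absurd (Finset.mem_image_of_mem Prod.fst heM) heA
    · obtain ⟨f, hfM, hcase⟩ := hmax e (hNE heN) heM
      rcases hcase with h1 | h2
      · exact absurd (h1 ▸ Finset.mem_image_of_mem Prod.fst hfM) heA
      · exact h2 ▸ Finset.mem_image_of_mem _ hfM
  have hL : (N.filter (fun e => e.2 ∉ B)).card ≤
      matchingNumber (E.filter fun e => e.1 ∈ A ∧ e.2 ∉ B) :=
    le_matchingNumber hLsub (hNmatch.subset (Finset.filter_subset _ _))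
  have hR : (N.filter (fun e => e.1 ∉ A)).card ≤
      matchingNumber (E.filter fun e => e.1 ∉ A ∧ e.2 ∈ B) :=
    le_matchingNumber hRsub (hNmatch.subset (Finset.filter_subset _ _))
  -- at most |M| edges of N touch A(M)
  have hAcard : (N.filter (fun e => e.1 ∈ A)).card ≤ M.card := by
    calc (N.filter (fun e => e.1 ∈ A)).card ≤ A.card := by
          apply Finset.card_le_card_of_injOn (fun e => e.1)
          · intro e he; exact (Finset.mem_filter.mp he).2
          · intro e he f hf hef
            by_contra hne
            exact (hNmatch e (Finset.mem_of_mem_filter e he) f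
              (Finset.mem_of_mem_filter f hf) hne).1 hef
      _ ≤ M.card := Finset.card_image_le
  have hBcard : (N.filter (fun e => e.2 ∈ B)).card ≤ M.card := by
    calc (N.filter (fun e => e.2 ∈ B)).card ≤ B.card := by
          apply Finset.card_le_card_of_injOn (fun e => e.2)
          · intro e he; exact (Finset.mem_filter.mp he).2
          · intro e he f hf hef
            by_contra hne
            exact (hNmatch e (Finset.mem_of_mem_filter e he) f
              (Finset.mem_of_mem_filter f hf) hne).2 hef
      _ ≤ M.card := Finset.card_image_le
  have hsplitA := Finset.card_filter_add_card_filter_not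
    (s := N) (p := fun e => e.1 ∈ A)
  have hsplitB := Finset.card_filter_add_card_filter_not
    (s := N) (p := fun e => e.2 ∈ B)
  have hμ : matchingNumber E = N.card := hNcard
  rw [hμ]
  push_cast
  omega
end

section
/- Let d ≥ 1 and p ∈ (0,1] be real numbers, and for ε ∈ [0, 1/2] define f(ε) = 1/2 + ε + ((1−2ε)/(d+p) − (1+2ε)/(2d))·p. Then: (i) if p ≤ d(√2−1), then f(ε) ≥ 1/2 + (1/(d+p) − 1/(2d))·p for all ε ∈ [0, 1/2]; and (ii) if p ≥ d(√2−1), then max(f(ε), 1/2 + ε) ≥ 1/2 + (d−p)/(6d+2p) for all ε ∈ [0, 1/2]. -/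
/-- The optimization over `ε` in the proof of Theorem 4.4. With
`f ε = 1/2 + ε + ((1−2ε)/(d+p) − (1+2ε)/(2d))·p`:
(i) if `p ≤ d(√2−1)` then `f ε ≥ 1/2 + (1/(d+p) − 1/(2d))·p` for all `ε ∈ [0,1/2]`;
(ii) if `p ≥ d(√2−1)` then `max (f ε) (1/2 + ε) ≥ 1/2 + (d−p)/(6d+2p)` for all
`ε ∈ [0,1/2]`. -/
theorem meta_alg_optimization (d p : ℝ) (hd : 1 ≤ d) (hp0 : 0 < p) (hp1 : p ≤ 1) :
    (p ≤ d * (Real.sqrt 2 - 1) →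
      ∀ ε : ℝ, 0 ≤ ε → ε ≤ 1 / 2 →
        1 / 2 + (1 / (d + p) - 1 / (2 * d)) * p ≤
          1 / 2 + ε + ((1 - 2 * ε) / (d + p) - (1 + 2 * ε) / (2 * d)) * p) ∧
    (d * (Real.sqrt 2 - 1) ≤ p →
      ∀ ε : ℝ, 0 ≤ ε → ε ≤ 1 / 2 →
        1 / 2 + (d - p) / (6 * d + 2 * p) ≤
          max (1 / 2 + ε + ((1 - 2 * ε) / (d + p) - (1 + 2 * ε) / (2 * d)) * p)
              (1 / 2 + ε)) := by
  have hd0 : (0:ℝ) < d := by linarith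
  have hdp : (0:ℝ) < d + p := by linarith
  have h2d : (0:ℝ) < 2 * d := by linarith
  have h6 : (0:ℝ) < 6 * d + 2 * p := by linarith
  have hs2 : Real.sqrt 2 ^ 2 = 2 := Real.sq_sqrt (by norm_num)
  have hs2' : 0 ≤ Real.sqrt 2 := Real.sqrt_nonneg 2
  constructor
  · intro hle ε hε0 hε1
    have hsq : (d + p) ^ 2 ≤ 2 * d ^ 2 := by nlinarith
    rw [div_sub_div _ _ (ne_of_gt hdp) (ne_of_gt h2d),
      div_sub_div _ _ (ne_of_gt hdp) (ne_of_gt h2d), div_mul_eq_mul_div, div_mul_eq_mul_div,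
      add_assoc, add_le_add_iff_left, add_div' _ _ _ (ne_of_gt (mul_pos hdp h2d)),
      div_le_div_iff₀ (mul_pos hdp h2d) (mul_pos hdp h2d)]
    nlinarith [mul_nonneg (mul_nonneg hε0 (sub_nonneg.mpr hsq)) (mul_pos hdp h2d).le,
      mul_nonneg (mul_nonneg hε0 (sub_nonneg.mpr hsq)) hp0.le]
  · intro hle ε hε0 hε1
    have h1 : d * Real.sqrt 2 ≤ d + p := by nlinarith
    have hsq : 2 * d ^ 2 ≤ (d + p) ^ 2 := by
      nlinarith [mul_le_mul h1 h1 (by positivity : (0:ℝ) ≤ d * Real.sqrt 2) hdp.le]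
    rcases le_total ((d - p) / (6 * d + 2 * p)) ε with h | h
    · exact le_max_of_le_right (by linarith)
    · refine le_max_of_le_left ?_
      rw [le_div_iff₀ h6] at h
      rw [div_sub_div _ _ (ne_of_gt hdp) (ne_of_gt h2d), div_mul_eq_mul_div,
        add_assoc, add_le_add_iff_left, add_div' _ _ _ (ne_of_gt (mul_pos hdp h2d)),
        div_le_div_iff₀ h6 (mul_pos hdp h2d)]
      nlinarith [mul_nonneg hε0 hp0.le, mul_nonneg (mul_nonneg hε0 hp0.le) hp0.le,
        mul_nonneg (mul_nonneg hε0 hp0.le) hd0.le]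
end

section
/- For a real d ≥ 1 and p ∈ (0,1], define F(d,p) = 1/2 + (1/(d+p) − 1/(2d))·p if p ≤ d(√2−1), and F(d,p) = 1/2 + (d−p)/(6d+2p) otherwise. Then F(d,p) ≤ 2 − √2 for every integer d ≥ 1 and every p ∈ (0,1]; moreover F(1, √2−1) = 2 − √2 and F(2, 2√2−2) = 2 − √2. -/
/-!
Both branches are bounded by `2 - √2` for every real `d > 0` and `p ≥ 0`, and both meet this
value at the switching point `p = d (√2 - 1)`. On the first branch the defect is a perfect
square, `(3/2 - √2) · 2d(d + p) - (d - p) p = (p - d(√2 - 1))²`; the second branch is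
decreasing in `p` and hence maximal at the switching point.
-/

/-- The approximation factor of the meta-algorithm of Theorem 4.4,
parameterised by the degree bound `d` and sampling probability `p`. -/
noncomputable def metaFactor (d p : ℝ) : ℝ :=
  if p ≤ d * (Real.sqrt 2 - 1) then 1 / 2 + (1 / (d + p) - 1 / (2 * d)) * p
  else 1 / 2 + (d - p) / (6 * d + 2 * p)

open Real

lemma one_half_add_mul_le_two_sub_sqrt_two {d p : ℝ} (hd : 0 < d) (hp : 0 ≤ p) :
    1 / 2 + (1 / (d + p) - 1 / (2 * d)) * p ≤ 2 - √2 := by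
  have hs : √2 ^ 2 = 2 := sq_sqrt zero_le_two
  have hdp : 0 < d + p := by linarith
  have hrewrite : (1 / (d + p) - 1 / (2 * d)) * p = (d - p) * p / ((d + p) * (2 * d)) := by
    field_simp
    ring
  have hsquare : (3 / 2 - √2) * ((d + p) * (2 * d)) - (d - p) * p = (p - d * (√2 - 1)) ^ 2 := by
    linear_combination (-d ^ 2) * hs
  have hbound : (d - p) * p / ((d + p) * (2 * d)) ≤ 3 / 2 - √2 := by
    rw [div_le_iff₀ (by positivity)]
    nlinarith [sq_nonneg (p - d * (√2 - 1))]
  linarith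

lemma one_half_add_div_le_two_sub_sqrt_two {d p : ℝ} (hd : 0 < d) (hp : d * (√2 - 1) ≤ p) :
    1 / 2 + (d - p) / (6 * d + 2 * p) ≤ 2 - √2 := by
  have hs : √2 ^ 2 = 2 := sq_sqrt zero_le_two
  have hs1 : 1 < √2 := one_lt_sqrt_two
  have hpos : 0 < 6 * d + 2 * p := by nlinarith
  have hbound : (d - p) / (6 * d + 2 * p) ≤ 3 / 2 - √2 := by
    rw [div_le_iff₀ hpos]
    -- `(3/2 - √2)(6d + 2p) - (d - p) = (4 - 2√2)(p - d(√2 - 1))`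
    nlinarith [mul_le_mul_of_nonneg_left hp (by nlinarith : (0 : ℝ) ≤ 4 - 2 * √2)]
  linarith

lemma metaFactor_le {d p : ℝ} (hd : 0 < d) (hp : 0 ≤ p) : metaFactor d p ≤ 2 - √2 := by
  unfold metaFactor
  split_ifs with h
  · exact one_half_add_mul_le_two_sub_sqrt_two hd hp
  · exact one_half_add_div_le_two_sub_sqrt_two hd (not_le.mp h).le

lemma metaFactor_mul_sqrt_two_sub_one {d : ℝ} (hd : 0 < d) :
    metaFactor d (d * (√2 - 1)) = 2 - √2 := by
  have hs : √2 ^ 2 = 2 := sq_sqrt zero_le_two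
  have hdp : d + d * (√2 - 1) = d * √2 := by ring
  rw [metaFactor, if_pos le_rfl, hdp]
  field_simp
  linear_combination hs

/-- `F(d,p) ≤ 2 − √2` for every integer `d ≥ 1` and `p ∈ (0,1]`, with equality
attained at `(d,p) = (1, √2−1)` and `(d,p) = (2, 2√2−2)`. -/
theorem metaFactor_le_two_sub_sqrt_two :
    (∀ d : ℕ, 1 ≤ d → ∀ p : ℝ, 0 < p → p ≤ 1 →
      metaFactor d p ≤ 2 - Real.sqrt 2) ∧
    metaFactor 1 (Real.sqrt 2 - 1) = 2 - Real.sqrt 2 ∧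
    metaFactor 2 (2 * Real.sqrt 2 - 2) = 2 - Real.sqrt 2 := by
  refine ⟨fun d hd p hp _ => metaFactor_le (by exact_mod_cast hd) hp.le, ?_, ?_⟩
  · simpa using metaFactor_mul_sqrt_two_sub_one one_pos
  · rw [show 2 * √2 - 2 = 2 * (√2 - 1) by ring]
    exact metaFactor_mul_sqrt_two_sub_one two_pos
end

section
/- Let p ∈ (0,1], let N ≥ 2 be an integer, and let X_1, …, X_N be independent random variables with P[X_k = 1] = p and P[X_k = 0] = 1 − p. Then with probability at least 1 − 2·N^{−16}, for all indices 1 ≤ i ≤ j ≤ N one has |∑_{k=i}^{j} X_k − p·(j − i + 1)| ≤ 3·√(N · ln N). -/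
/-!
Each centred indicator `X_k - p` takes values in an interval of length one, so by Hoeffding's
lemma it is sub-Gaussian with variance proxy `1/4`, and by independence the centred sum over an
interval of length `n ≤ N` exceeds `ε` in absolute value with probability at most
`2 exp(-2ε²/n)`. For `ε = 3√(N ln N)` this is at most `2N⁻¹⁸`, and a union bound over the at
most `N²` intervals leaves a failure probability of at most `2N⁻¹⁶`.
-/

open MeasureTheory ProbabilityTheory Real

set_option linter.deprecated false

lemma integral_bernoulli_indicator {p : ℝ} (hp0 : 0 ≤ p) (hp1 : p ≤ 1) :
    ∫ b, (if b then (1 : ℝ) else 0)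
      ∂(PMF.bernoulli (Real.toNNReal p) (Real.toNNReal_le_one.mpr hp1)).toMeasure = p := by
  simp [PMF.integral_eq_sum, PMF.bernoulli_apply, hp0]

lemma hasSubgaussianMGF_bernoulli_indicator_sub {p : ℝ} (hp0 : 0 ≤ p) (hp1 : p ≤ 1) :
    HasSubgaussianMGF (fun b : Bool => (if b then (1 : ℝ) else 0) - p) (1 / 4)
      (PMF.bernoulli (Real.toNNReal p) (Real.toNNReal_le_one.mpr hp1)).toMeasure := by
  have h := hasSubgaussianMGF_of_mem_Icc (a := 0) (b := 1)
    (X := fun b : Bool => if b then (1 : ℝ) else 0)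
    (μ := (PMF.bernoulli (Real.toNNReal p) (Real.toNNReal_le_one.mpr hp1)).toMeasure)
    (by fun_prop) (ae_of_all _ fun b => by cases b <;> simp)
  rw [integral_bernoulli_indicator hp0 hp1] at h
  convert h using 2
  norm_num

section Product

variable {ι Ω : Type*} [Fintype ι] [MeasurableSpace Ω] {ν : Measure Ω}
  [IsProbabilityMeasure ν] {f : Ω → ℝ} {c : NNReal}

lemma ProbabilityTheory.HasSubgaussianMGF.comp_eval (hf : HasSubgaussianMGF f c ν) (i : ι) :
    HasSubgaussianMGF (fun ω : ι → Ω => f (ω i)) c (Measure.pi fun _ => ν) := by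
  refine HasSubgaussianMGF.of_map (Y := Function.eval i) (measurable_pi_apply i).aemeasurable ?_
  rwa [(measurePreserving_eval (fun _ : ι => ν) i).map_eq]

lemma measureReal_pi_sum_ge_le (hf : HasSubgaussianMGF f c ν) (s : Finset ι) {ε : ℝ}
    (hε : 0 ≤ ε) :
    (Measure.pi fun _ => ν).real {ω | ε ≤ ∑ i ∈ s, f (ω i)} ≤
      exp (-ε ^ 2 / (2 * s.card * c)) := by
  have := HasSubgaussianMGF.measure_sum_ge_le_of_iIndepFun
    (iIndepFun_pi (X := fun _ : ι => f) fun _ => hf.aemeasurable)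
    (c := fun _ => c) (s := s) (fun i _ => hf.comp_eval i) hε
  simpa [mul_assoc] using this

lemma measureReal_pi_abs_sum_ge_le (hf : HasSubgaussianMGF f c ν) (s : Finset ι)
    {ε : ℝ} (hε : 0 ≤ ε) :
    (Measure.pi fun _ => ν).real {ω | ε ≤ |∑ i ∈ s, f (ω i)|} ≤
      2 * exp (-ε ^ 2 / (2 * s.card * c)) := by
  have hsplit : {ω : ι → Ω | ε ≤ |∑ i ∈ s, f (ω i)|} ⊆
      {ω | ε ≤ ∑ i ∈ s, f (ω i)} ∪ {ω | ε ≤ ∑ i ∈ s, (-f) (ω i)} := by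
    intro ω hω
    simp only [Set.mem_setOf_eq, Set.mem_union, Pi.neg_apply, Finset.sum_neg_distrib] at hω ⊢
    rcases le_abs'.mp hω with h | h
    · exact Or.inr (by linarith)
    · exact Or.inl h
  calc _ ≤ _ := measureReal_mono hsplit
    _ ≤ _ := measureReal_union_le _ _
    _ ≤ _ := by
      rw [two_mul]
      exact add_le_add (measureReal_pi_sum_ge_le hf s hε)
        (measureReal_pi_sum_ge_le hf.neg s hε)

end Product

lemma measureReal_abs_sum_indicator_sub_ge_le {p : ℝ} (hp0 : 0 ≤ p) (hp1 : p ≤ 1) {ι : Type*}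
    [Fintype ι] (s : Finset ι) {ε : ℝ} (hε : 0 ≤ ε) :
    (Measure.pi fun _ : ι =>
        (PMF.bernoulli (Real.toNNReal p) (Real.toNNReal_le_one.mpr hp1)).toMeasure).real
      {ω | ε ≤ |(∑ k ∈ s, if ω k then (1 : ℝ) else 0) - p * s.card|} ≤
      2 * exp (-2 * ε ^ 2 / s.card) := by
  have h := measureReal_pi_abs_sum_ge_le
    (hasSubgaussianMGF_bernoulli_indicator_sub hp0 hp1) s hε
  simp only [Finset.sum_sub_distrib, Finset.sum_const, nsmul_eq_mul, mul_comm _ p] at h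
  refine h.trans_eq ?_
  rw [show 2 * (s.card : ℝ) * ((1 / 4 : NNReal) : ℝ) = s.card / 2 by push_cast; ring,
    div_div_eq_mul_div]
  ring_nf

lemma exp_neg_two_mul_sq_div_le_s14 {n N : ℕ} (hn : 0 < n) (hnN : n ≤ N) :
    exp (-2 * (3 * √(N * log N)) ^ 2 / n) ≤ 1 / (N : ℝ) ^ 18 := by
  have hN : (1 : ℝ) ≤ N := by exact_mod_cast hn.trans_le hnN
  have hlog : 0 ≤ log N := log_nonneg hN
  have hsq : (3 * √(N * log N)) ^ 2 = 9 * (N * log N) := by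
    rw [mul_pow, sq_sqrt (by positivity)]; norm_num
  have hexp : -2 * (3 * √(N * log N)) ^ 2 / n ≤ -(18 * log N) := by
    rw [hsq, div_le_iff₀ (by exact_mod_cast hn)]
    have : (n : ℝ) ≤ N := by exact_mod_cast hnN
    nlinarith
  calc exp (-2 * (3 * √(N * log N)) ^ 2 / n) ≤ exp (-(18 * log N)) := exp_le_exp.mpr hexp
    _ = 1 / (N : ℝ) ^ 18 := by
      rw [show 18 * log N = log ((N : ℝ) ^ 18) by rw [log_pow]; norm_num, exp_neg,
        exp_log (by positivity), one_div]

lemma Fin.cast_card_Icc {N : ℕ} {i j : Fin N} (hij : i ≤ j) :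
    ((Finset.Icc i j).card : ℝ) = (j : ℝ) - i + 1 := by
  rw [Fin.card_Icc, Nat.cast_sub (by omega)]
  push_cast
  ring

lemma measureReal_interval_deviation_le {p : ℝ} (hp0 : 0 ≤ p) (hp1 : p ≤ 1) {N : ℕ}
    {i j : Fin N} (hij : i ≤ j) :
    (Measure.pi fun _ : Fin N =>
        (PMF.bernoulli (Real.toNNReal p) (Real.toNNReal_le_one.mpr hp1)).toMeasure).real
      {ω | 3 * √(N * log N) ≤
        |(∑ k ∈ Finset.Icc i j, if ω k then (1 : ℝ) else 0) - p * ((j : ℝ) - i + 1)|} ≤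
      2 / (N : ℝ) ^ 18 := by
  rw [← Fin.cast_card_Icc hij]
  exact (measureReal_abs_sum_indicator_sub_ge_le hp0 hp1 _ (by positivity)).trans <|
    (mul_le_mul_of_nonneg_left (exp_neg_two_mul_sq_div_le_s14
      (Finset.nonempty_Icc.mpr hij).card_pos (card_finset_fin_le _)) zero_le_two).trans_eq
    (mul_one_div _ _)

lemma measureReal_exists_interval_deviation_le {p : ℝ} (hp0 : 0 ≤ p) (hp1 : p ≤ 1) {N : ℕ}
    (hN : N ≠ 0) :
    (Measure.pi fun _ : Fin N =>
        (PMF.bernoulli (Real.toNNReal p) (Real.toNNReal_le_one.mpr hp1)).toMeasure).real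
      {ω | ∃ i j : Fin N, i ≤ j ∧ 3 * √(N * log N) <
        |(∑ k ∈ Finset.Icc i j, if ω k then (1 : ℝ) else 0) - p * ((j : ℝ) - i + 1)|} ≤
      2 / (N : ℝ) ^ 16 := by
  set intervals := Finset.univ.filter fun ij : Fin N × Fin N => ij.1 ≤ ij.2
  have hcover : {ω : Fin N → Bool | ∃ i j : Fin N, i ≤ j ∧ 3 * √(N * log N) <
        |(∑ k ∈ Finset.Icc i j, if ω k then (1 : ℝ) else 0) - p * ((j : ℝ) - i + 1)|} ⊆
      ⋃ ij ∈ intervals, {ω | 3 * √(N * log N) ≤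
        |(∑ k ∈ Finset.Icc ij.1 ij.2, if ω k then (1 : ℝ) else 0) -
          p * ((ij.2 : ℝ) - ij.1 + 1)|} := by
    rintro ω ⟨i, j, hij, hdev⟩
    exact Set.mem_biUnion (x := (i, j)) (by simpa [intervals] using hij) hdev.le
  calc _ ≤ _ := (measureReal_mono hcover (measure_ne_top _ _)).trans
        (measureReal_biUnion_finset_le _ _)
    _ ≤ ∑ _ij : Fin N × Fin N, 2 / (N : ℝ) ^ 18 :=
      (Finset.sum_le_sum fun ij hij =>
          measureReal_interval_deviation_le hp0 hp1 (Finset.mem_filter.mp hij).2).trans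
        (Finset.sum_le_sum_of_subset_of_nonneg (Finset.filter_subset _ _)
          fun _ _ _ => by positivity)
    _ = 2 / (N : ℝ) ^ 16 := by
      have hN0 : (N : ℝ) ≠ 0 := by exact_mod_cast hN
      rw [Finset.sum_const, Finset.card_univ, Fintype.card_prod, Fintype.card_fin, nsmul_eq_mul]
      push_cast
      field_simp

/-- Claim 5.1 of the paper: for independent Bernoulli(`p`) indicators
`X_1, …, X_N` (modelled by the product Bernoulli measure on `Fin N → Bool`),
with probability at least `1 − 2N^{−16}`, every interval sum satisfies
`|∑_{k=i}^j X_k − p(j − i + 1)| ≤ 3√(N ln N)`. -/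
theorem interval_sums_concentrate (p : ℝ) (hp0 : 0 < p) (hp1 : p ≤ 1)
    (N : ℕ) (hN : 2 ≤ N) :
    ENNReal.ofReal (1 - 2 / (N : ℝ) ^ 16) ≤
      (Measure.pi fun _ : Fin N =>
          (PMF.bernoulli (Real.toNNReal p) (Real.toNNReal_le_one.mpr hp1)).toMeasure)
        {ω : Fin N → Bool | ∀ i j : Fin N, i ≤ j →
          |(∑ k ∈ Finset.Icc i j, (if ω k then (1 : ℝ) else 0)) -
              p * ((j.val : ℝ) - (i.val : ℝ) + 1)| ≤
            3 * Real.sqrt (N * Real.log N)} := by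
  refine (ENNReal.ofReal_le_ofReal ?_).trans_eq (ofReal_measureReal (measure_ne_top _ _))
  rw [eq_sub_of_add_eq (probReal_add_probReal_compl MeasurableSet.of_discrete),
    sub_le_sub_iff_left]
  refine (measureReal_mono (fun ω hω => ?_) (measure_ne_top _ _)).trans
    (measureReal_exists_interval_deviation_le hp0.le hp1 (by omega))
  simpa only [Set.mem_compl_iff, Set.mem_setOf_eq, not_forall, not_le, exists_prop] using hω
end
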